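/- arXiv:2401.02907 — 2 statements merged into one kernel-verified Lean document; each statement's English description precedes it below -/
import Mathlib

section
/- Let U = {(u,v,r,θ) ∈ ℝ⁴ : r ≠ 0} and define the vector fields X₁, X₂, X₃ : U → ℝ⁴ (components in the coordinate order (u,v,r,θ)) by X₁ = (0, 0, −cos θ, sin θ / r), X₂ = (0, 0, sin θ, cos θ / r), X₃ = (0, 0, 0, 1). Then at every point x ∈ U the pointwise Lie brackets satisfy [X₁,X₂](x) = 0, [X₁,X₃](x) = −X₂(x), and [X₂,X₃](x) = X₁(x). -/
/-- Pointwise Lie bracket of vector fields on ℝ⁴: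
`[V,W](x) = (DW)(x)(V(x)) − (DV)(x)(W(x))`. -/
noncomputable def lieBracket4 (V W : (Fin 4 → ℝ) → (Fin 4 → ℝ)) (x : Fin 4 → ℝ) :
    Fin 4 → ℝ :=
  fderiv ℝ W x (V x) - fderiv ℝ V x (W x)

/- Coordinates are `(u, v, r, θ) = (x 0, x 1, x 2, x 3)`. -/

noncomputable def E2X₁ : (Fin 4 → ℝ) → (Fin 4 → ℝ) := fun x =>
  ![0, 0, -Real.cos (x 3), Real.sin (x 3) / x 2]

noncomputable def E2X₂ : (Fin 4 → ℝ) → (Fin 4 → ℝ) := fun x =>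
  ![0, 0, Real.sin (x 3), Real.cos (x 3) / x 2]

noncomputable def E2X₃ : (Fin 4 → ℝ) → (Fin 4 → ℝ) := fun _ =>
  ![0, 0, 0, 1]

/-! `X₁` and `X₂` are both of the form `f(θ) ∂_r + (g(θ) / r) ∂_θ`, and the bracket of two such
fields has a closed form in `f`, `g` and their derivatives. Since `X₃ = ∂_θ` is constant,
`[X, X₃] = -∂_θ X`. -/

open Real ContinuousLinearMap

noncomputable def polarField (f g : ℝ → ℝ) (y : Fin 4 → ℝ) : Fin 4 → ℝ :=
  ![0, 0, f (y 3), g (y 3) / y 2]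

section polarField

variable {f g f₁ g₁ f₂ g₂ : ℝ → ℝ} {f' g' f₁' g₁' f₂' g₂' : ℝ} {x : Fin 4 → ℝ}

lemma hasFDerivAt_polarField (hf : HasDerivAt f f' (x 3)) (hg : HasDerivAt g g' (x 3))
    (hx : x 2 ≠ 0) :
    HasFDerivAt (polarField f g)
      (pi ![0, 0, f' • proj 3, (g' / x 2) • proj 3 - (g (x 3) / x 2 ^ 2) • proj 2] :
        (Fin 4 → ℝ) →L[ℝ] Fin 4 → ℝ) x := by
  have hθ : HasFDerivAt (fun y : Fin 4 → ℝ => y 3) (proj 3 : (Fin 4 → ℝ) →L[ℝ] ℝ) x :=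
    hasFDerivAt_apply 3 x
  have hr : HasFDerivAt (fun y : Fin 4 → ℝ => (y 2)⁻¹)
      (-(x 2 ^ 2)⁻¹ • proj 2 : (Fin 4 → ℝ) →L[ℝ] ℝ) x :=
    (hasDerivAt_inv hx).comp_hasFDerivAt x (hasFDerivAt_apply 2 x)
  rw [hasFDerivAt_pi']
  intro i
  fin_cases i
  · exact hasFDerivAt_const 0 x
  · exact hasFDerivAt_const 0 x
  · exact hf.comp_hasFDerivAt x hθ
  · refine ((hg.comp_hasFDerivAt x hθ).mul hr).congr_fderiv ?_
    ext v
    simp only [proj_pi, Fin.reduceFinMk, Matrix.cons_val, Function.comp_apply, add_apply,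
      sub_apply, smul_apply, proj_apply, smul_eq_mul]
    ring

lemma fderiv_polarField_apply (hf : HasDerivAt f f' (x 3)) (hg : HasDerivAt g g' (x 3))
    (hx : x 2 ≠ 0) (v : Fin 4 → ℝ) :
    fderiv ℝ (polarField f g) x v =
      ![0, 0, f' * v 3, g' / x 2 * v 3 - g (x 3) / x 2 ^ 2 * v 2] := by
  rw [(hasFDerivAt_polarField hf hg hx).fderiv]
  ext i
  fin_cases i <;> simp

lemma lieBracket4_polarField (hf₁ : HasDerivAt f₁ f₁' (x 3)) (hg₁ : HasDerivAt g₁ g₁' (x 3))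
    (hf₂ : HasDerivAt f₂ f₂' (x 3)) (hg₂ : HasDerivAt g₂ g₂' (x 3)) (hx : x 2 ≠ 0) :
    lieBracket4 (polarField f₁ g₁) (polarField f₂ g₂) x =
      ![0, 0, (f₂' * g₁ (x 3) - f₁' * g₂ (x 3)) / x 2,
        (g₂' * g₁ (x 3) - g₁' * g₂ (x 3) + f₂ (x 3) * g₁ (x 3) - f₁ (x 3) * g₂ (x 3)) / x 2 ^ 2] := by
  rw [lieBracket4, fderiv_polarField_apply hf₂ hg₂ hx, fderiv_polarField_apply hf₁ hg₁ hx]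
  ext i
  fin_cases i <;> simp [polarField] <;> ring

end polarField

lemma lieBracket4_const_right (V : (Fin 4 → ℝ) → Fin 4 → ℝ) (c x : Fin 4 → ℝ) :
    lieBracket4 V (fun _ => c) x = -fderiv ℝ V x c := by
  simp [lieBracket4]

lemma E2X₁_eq : E2X₁ = polarField (-cos) sin := rfl
lemma E2X₂_eq : E2X₂ = polarField sin cos := rfl
lemma E2X₃_eq : E2X₃ = fun _ => ![0, 0, 0, 1] := rfl

theorem stmt_2 (x : Fin 4 → ℝ) (hx : x 2 ≠ 0) :
    lieBracket4 E2X₁ E2X₂ x = 0 ∧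
    lieBracket4 E2X₁ E2X₃ x = -(E2X₂ x) ∧
    lieBracket4 E2X₂ E2X₃ x = E2X₁ x := by
  have hsin := hasDerivAt_sin (x 3)
  have hcos := hasDerivAt_cos (x 3)
  have hncos := hcos.neg
  refine ⟨?_, ?_, ?_⟩
  · rw [E2X₁_eq, E2X₂_eq, lieBracket4_polarField hncos hsin hsin hcos hx]
    ext i
    fin_cases i <;> simp [hx] <;> ring
  · rw [E2X₃_eq, lieBracket4_const_right, E2X₁_eq, fderiv_polarField_apply hncos hsin hx]
    ext i
    fin_cases i <;> simp [E2X₂]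
  · rw [E2X₃_eq, lieBracket4_const_right, E2X₂_eq, fderiv_polarField_apply hsin hcos hx]
    ext i
    fin_cases i <;> simp [E2X₁, neg_div]
end

section
/- Let h : ℝ⁴ → (4×4 real matrices) be a differentiable vierbein field (entries h^a_μ, with a the frame index and μ the coordinate index), let X : ℝ⁴ → ℝ⁴ be a differentiable vector field, and let M : ℝ⁴ → (4×4 real matrices) satisfy (M(x))ᵀ η + η M(x) = 0 for every x (i.e., M(x) lies in the Lorentz Lie algebra). Suppose X is an affine frame symmetry generator in the sense that for all x, a, μ: Σ_ν X^ν(x) ∂_ν h^a_μ(x) + Σ_ν ∂_μ X^ν(x) h^a_ν(x) = Σ_b M(x)^a_b h^b_μ(x). Define the metric components g_{μν}(x) = Σ_{a,b} η_{ab} h^a_μ(x) h^b_ν(x). Then X is a Killing vector field of g: for all x, μ, σ, Σ_ν X^ν(x) ∂_ν g_{μσ}(x) + Σ_ν ∂_μ X^ν(x) g_{νσ}(x) + Σ_ν ∂_σ X^ν(x) g_{μν}(x) = 0. -/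
open Matrix Finset

/-- The Minkowski matrix diag(−1,1,1,1). -/
def ηM : Matrix (Fin 4) (Fin 4) ℝ :=
  !![-1, 0, 0, 0; 0, 1, 0, 0; 0, 0, 1, 0; 0, 0, 0, 1]

/-- The μ-th partial derivative of a function on ℝ⁴. -/
noncomputable def pd (f : (Fin 4 → ℝ) → ℝ) (μ : Fin 4) (x : Fin 4 → ℝ) : ℝ :=
  fderiv ℝ f x (Pi.single μ 1)

/-!
In matrix notation, with `H = (h^a_μ)`, `D = X·∂H` and `J = (∂_μ X^ν)`, the metric is
`g = Hᵀ η H` and the symmetry condition reads `D + H J = M H`. By the Leibniz rule the Killing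
expression is `Dᵀ η H + Hᵀ η D + Jᵀ g + g J = (D + H J)ᵀ η H + Hᵀ η (D + H J)
= Hᵀ (Mᵀ η + η M) H`, which vanishes because `M` lies in the Lorentz algebra.
-/

theorem sum_mul_pd_eq_fderiv (f : (Fin 4 → ℝ) → ℝ) (x v : Fin 4 → ℝ) :
    ∑ ν, v ν * pd f ν x = fderiv ℝ f x v := by
  conv_rhs => rw [← Finset.univ_sum_single v]
  simp only [pd, map_sum]
  refine Finset.sum_congr rfl fun ν _ => ?_
  rw [← smul_eq_mul, ← map_smul, ← Pi.single_smul', smul_eq_mul, mul_one]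

theorem fderiv_sum_sum_mul_mul {E ι : Type*} [NormedAddCommGroup E] [NormedSpace ℝ E]
    [Fintype ι] (η : Matrix ι ι ℝ) {u w : E → ι → ℝ} {x : E}
    (hu : ∀ a, DifferentiableAt ℝ (u · a) x) (hw : ∀ b, DifferentiableAt ℝ (w · b) x) (v : E) :
    fderiv ℝ (fun y => ∑ a, ∑ b, η a b * u y a * w y b) x v =
      ∑ a, ∑ b, η a b * (fderiv ℝ (u · a) x v * w x b + u x a * fderiv ℝ (w · b) x v) := by
  have huw : ∀ a b, DifferentiableAt ℝ (fun y => η a b * u y a * w y b) x := fun a b =>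
    ((hu a).const_mul _).mul (hw b)
  rw [fderiv_fun_sum fun a _ => DifferentiableAt.fun_sum fun b _ => huw a b]
  simp only [FunLike.coe_sum, Finset.sum_apply]
  refine Finset.sum_congr rfl fun a _ => ?_
  rw [fderiv_fun_sum fun b _ => huw a b]
  simp only [FunLike.coe_sum, Finset.sum_apply]
  refine Finset.sum_congr rfl fun b _ => ?_
  rw [fderiv_fun_mul ((hu a).const_mul _) (hw b), fderiv_const_mul (hu a)]
  simp only [FunLike.coe_add, FunLike.coe_smul, Pi.add_apply, Pi.smul_apply, smul_eq_mul]
  ring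

theorem transpose_mul_mul_apply {R ι κ : Type*} [CommSemiring R] [Fintype ι]
    (A B : Matrix ι κ R) (η : Matrix ι ι R) (μ σ : κ) :
    (Aᵀ * η * B) μ σ = ∑ a, ∑ b, η a b * A a μ * B b σ := by
  simp only [mul_apply, transpose_apply, Finset.sum_mul]
  rw [Finset.sum_comm]
  exact Finset.sum_congr rfl fun a _ => Finset.sum_congr rfl fun b _ => by ring

theorem transpose_mul_mul_add_eq_zero {R ι κ : Type*} [CommRing R] [Fintype ι] [Fintype κ]
    {η M : Matrix ι ι R} {H D : Matrix ι κ R} {J : Matrix κ κ R}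
    (hM : Mᵀ * η + η * M = 0) (hD : D + H * J = M * H) :
    Dᵀ * η * H + Hᵀ * η * D + Jᵀ * (Hᵀ * η * H) + Hᵀ * η * H * J = 0 :=
  calc Dᵀ * η * H + Hᵀ * η * D + Jᵀ * (Hᵀ * η * H) + Hᵀ * η * H * J
      = (D + H * J)ᵀ * η * H + Hᵀ * η * (D + H * J) := by
        simp only [transpose_add, transpose_mul, Matrix.add_mul, Matrix.mul_add, Matrix.mul_assoc]
        abel
    _ = Hᵀ * (Mᵀ * η + η * M) * H := by
        simp only [hD, transpose_mul, Matrix.add_mul, Matrix.mul_add, Matrix.mul_assoc]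
    _ = 0 := by rw [hM, Matrix.mul_zero, Matrix.zero_mul]

theorem stmt_14_general
    (h : (Fin 4 → ℝ) → Fin 4 → Fin 4 → ℝ)    -- vierbein components h^a_μ
    (X : (Fin 4 → ℝ) → Fin 4 → ℝ)            -- vector field components X^ν
    (M : (Fin 4 → ℝ) → Matrix (Fin 4) (Fin 4) ℝ)
    (hdiff : ∀ a μ, Differentiable ℝ (fun x => h x a μ))
    (hM : ∀ x, (M x)ᵀ * ηM + ηM * M x = 0)
    (hsym : ∀ x a μ,
      (∑ ν, X x ν * pd (fun y => h y a μ) ν x)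
        + (∑ ν, pd (fun y => X y ν) μ x * h x a ν)
      = ∑ b, M x a b * h x b μ)
    (g : (Fin 4 → ℝ) → Fin 4 → Fin 4 → ℝ)
    (hg : ∀ x μ ν, g x μ ν = ∑ a, ∑ b, ηM a b * h x a μ * h x b ν) :
    ∀ x μ σ,
      (∑ ν, X x ν * pd (fun y => g y μ σ) ν x)
        + (∑ ν, pd (fun y => X y ν) μ x * g x ν σ)
        + (∑ ν, pd (fun y => X y ν) σ x * g x μ ν) = 0 := by
  intro x μ σ
  let H : Matrix (Fin 4) (Fin 4) ℝ := Matrix.of (h x)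
  let D : Matrix (Fin 4) (Fin 4) ℝ := Matrix.of fun a μ => fderiv ℝ (fun y => h y a μ) x (X x)
  let J : Matrix (Fin 4) (Fin 4) ℝ := Matrix.of fun ν μ => pd (fun y => X y ν) μ x
  have hgH : ∀ μ ν, g x μ ν = (Hᵀ * ηM * H) μ ν := fun μ ν => by
    rw [hg, transpose_mul_mul_apply]; rfl
  have hD : D + H * J = M x * H := by
    ext a μ
    simpa [D, H, J, mul_apply, sum_mul_pd_eq_fderiv, mul_comm] using hsym x a μ
  have hderiv : ∑ ν, X x ν * pd (fun y => g y μ σ) ν x = (Dᵀ * ηM * H + Hᵀ * ηM * D) μ σ := by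
    rw [sum_mul_pd_eq_fderiv, funext fun y => hg y μ σ, fderiv_sum_sum_mul_mul ηM
      (fun a => (hdiff a μ).differentiableAt) (fun b => (hdiff b σ).differentiableAt),
      Matrix.add_apply, transpose_mul_mul_apply, transpose_mul_mul_apply, ← Finset.sum_add_distrib]
    refine Finset.sum_congr rfl fun a _ => ?_
    rw [← Finset.sum_add_distrib]
    exact Finset.sum_congr rfl fun b _ => by simp only [D, H, of_apply]; ring
  calc _ = (Dᵀ * ηM * H + Hᵀ * ηM * D + Jᵀ * (Hᵀ * ηM * H) + Hᵀ * ηM * H * J) μ σ := by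
        simp only [Matrix.add_apply, ← hderiv, mul_apply (M := Jᵀ), mul_apply (M := Hᵀ * ηM * H),
          ← hgH, transpose_apply, J, of_apply, mul_comm]
    _ = 0 := by rw [transpose_mul_mul_add_eq_zero (hM x) hD, Matrix.zero_apply]

/-- An affine frame symmetry generator is a Killing vector field of the metric
built from the vierbein. -/
theorem stmt_14
    (h : (Fin 4 → ℝ) → Fin 4 → Fin 4 → ℝ)    -- vierbein components h^a_μ
    (X : (Fin 4 → ℝ) → Fin 4 → ℝ)            -- vector field components X^ν
    (M : (Fin 4 → ℝ) → Matrix (Fin 4) (Fin 4) ℝ)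
    (hdiff : ∀ a μ, Differentiable ℝ (fun x => h x a μ))
    (hXdiff : ∀ ν, Differentiable ℝ (fun x => X x ν))
    (hM : ∀ x, (M x)ᵀ * ηM + ηM * M x = 0)
    (hsym : ∀ x a μ,
      (∑ ν, X x ν * pd (fun y => h y a μ) ν x)
        + (∑ ν, pd (fun y => X y ν) μ x * h x a ν)
      = ∑ b, M x a b * h x b μ)
    (g : (Fin 4 → ℝ) → Fin 4 → Fin 4 → ℝ)
    (hg : ∀ x μ ν, g x μ ν = ∑ a, ∑ b, ηM a b * h x a μ * h x b ν) :
    ∀ x μ σ,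
      (∑ ν, X x ν * pd (fun y => g y μ σ) ν x)
        + (∑ ν, pd (fun y => X y ν) μ x * g x ν σ)
        + (∑ ν, pd (fun y => X y ν) σ x * g x μ ν) = 0 :=
  stmt_14_general h X M hdiff hM hsym g hg
end
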